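/- arXiv:1701.04521 — 4 statements merged into one kernel-verified Lean document; each statement's English description precedes it below -/
import Mathlib

section
/- Suppose H = H_1 ∪ ... ∪ H_t is a union of τ-subgraphs of a factor graph G, each H_j having at most SMALL constraint-vertices, and suppose for every j the partial union H_1 ∪ ... ∪ H_j has revenue at most ζ·SMALL. Assume every τ-subgraph of G with at most 2·SMALL constraint-vertices is plausible (income ≥ 0). Then H has at most SMALL constraint-vertices. -/
open scoped Classical
open Finset

namespace CSP

variable {Cn Vr : Type*} [Fintype Cn] [Fintype Vr] [DecidableEq Cn] [DecidableEq Vr]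

/-- Constraint-vertices of an edge-induced subgraph (given as a set of edges). -/
def consOf (H : Finset (Cn × Vr)) : Finset Cn := H.image Prod.fst

/-- Variable-vertices of an edge-induced subgraph. -/
def vbls (H : Finset (Cn × Vr)) : Finset Vr := H.image Prod.snd

/-- Degree of a constraint-vertex within `H`. -/
def degC (H : Finset (Cn × Vr)) (f : Cn) : ℕ := (H.filter fun e => e.1 = f).card

/-- Degree of a variable-vertex within `H`. -/
def degV (H : Finset (Cn × Vr)) (v : Vr) : ℕ := (H.filter fun e => e.2 = v).card

/-- Leaf variable-vertices: those of degree exactly 1. -/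
def leaves (H : Finset (Cn × Vr)) : Finset Vr := (vbls H).filter fun v => degV H v = 1

/-- Revenue: one credit per leaf variable-vertex, minus a debit for each excess edge
(edges beyond 2 at a variable-vertex, beyond `τ` at a constraint-vertex). -/
def revenue (τ : ℕ) (H : Finset (Cn × Vr)) : ℝ :=
  ((leaves H).card : ℝ)
    - (((∑ v ∈ vbls H, (degV H v - 2)) + ∑ f ∈ consOf H, (degC H f - τ) : ℕ) : ℝ)

/-- A `τ`-subgraph: every constraint-vertex has degree at least `τ`. -/
def IsTau (τ : ℕ) (H : Finset (Cn × Vr)) : Prop := ∀ f ∈ consOf H, τ ≤ degC H f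

/-- Plausibility: income `R(H) - ζ·|consOf H|` is nonnegative. -/
def Plausible (τ : ℕ) (ζ : ℝ) (H : Finset (Cn × Vr)) : Prop :=
  ζ * ((consOf H).card : ℝ) ≤ revenue τ H

/-- The Plausibility Assumption for a factor graph with edge set `E`. -/
def PlausibilityAssumption (τ : ℕ) (ζ : ℝ) (SMALL : ℕ) (E : Finset (Cn × Vr)) : Prop :=
  ∀ H ⊆ E, IsTau τ H → (consOf H).card ≤ 2 * SMALL → Plausible τ ζ H

/-- `S`-closed: a `τ`-subgraph all of whose leaf variable-vertices lie in `S`. -/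
def SClosed (τ : ℕ) (S : Finset Vr) (H : Finset (Cn × Vr)) : Prop :=
  IsTau τ H ∧ leaves H ⊆ S

/-- The closure of `S`: the union of all small `S`-closed `τ`-subgraphs of `E`. -/
noncomputable def closure (τ SMALL : ℕ) (E : Finset (Cn × Vr)) (S : Finset Vr) :
    Finset (Cn × Vr) :=
  (E.powerset.filter fun H => SClosed τ S H ∧ (consOf H).card ≤ SMALL).sup id

end CSP

open CSP

/-- If `H = H₁ ∪ ⋯ ∪ H_t` is a union of small τ-subgraphs of a factor graph satisfying the
Plausibility Assumption, and every partial union has revenue at most `ζ·SMALL`, then the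
union has at most `SMALL` constraint-vertices. -/
theorem stmt_3 {Cn Vr : Type*} [Fintype Cn] [Fintype Vr] [DecidableEq Cn] [DecidableEq Vr]
    (τ SMALL : ℕ) (hτ : 3 ≤ τ) (hSMALL : 1 ≤ SMALL)
    (ζ : ℝ) (hζ0 : 0 < ζ) (hζ1 : ζ < 1)
    (E : Finset (Cn × Vr)) (hPA : PlausibilityAssumption τ ζ SMALL E)
    (t : ℕ) (ht : 1 ≤ t) (H : Fin t → Finset (Cn × Vr))
    (hsub : ∀ j, H j ⊆ E) (htau : ∀ j, IsTau τ (H j))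
    (hsmall : ∀ j, (consOf (H j)).card ≤ SMALL)
    (hrev : ∀ j : Fin t, revenue τ ((Finset.Iic j).sup H) ≤ ζ * SMALL) :
    (consOf (Finset.univ.sup H)).card ≤ SMALL := by
  obtain ⟨n, rfl⟩ : ∃ n, t = n + 1 := ⟨t - 1, by omega⟩
  have hdegC_mono : ∀ (A B : Finset (Cn × Vr)), A ⊆ B → ∀ f, degC A f ≤ degC B f :=
    fun A B hAB f => Finset.card_le_card (Finset.filter_subset_filter _ hAB)
  have htauSup : ∀ (s : Finset (Fin (n+1))), IsTau τ (s.sup H) := by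
    intro s f hf
    simp only [consOf, Finset.mem_image] at hf
    obtain ⟨e, he, rfl⟩ := hf
    rw [Finset.mem_sup] at he
    obtain ⟨i, hi, hei⟩ := he
    have h1 : τ ≤ degC (H i) e.1 := htau i _ (Finset.mem_image_of_mem _ hei)
    exact h1.trans (hdegC_mono _ _ (Finset.le_sup hi) _)
  have hsubSup : ∀ (s : Finset (Fin (n+1))), s.sup H ⊆ E :=
    fun s => Finset.sup_le fun i _ => hsub i
  have key : ∀ j : Fin (n+1), (consOf ((Finset.Iic j).sup H)).card ≤ SMALL := by
    intro j
    induction j using Fin.induction with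
    | zero =>
      have h0 : (Finset.Iic (0 : Fin (n+1))) = {0} := by
        ext a; simp only [Finset.mem_Iic, Finset.mem_singleton, Fin.le_def, Fin.ext_iff, Fin.val_zero]; omega
      rw [h0, Finset.sup_singleton]
      exact hsmall 0
    | succ i ih =>
      have hins : Finset.Iic i.succ = insert i.succ (Finset.Iic i.castSucc) := by
        ext a
        simp only [Finset.mem_Iic, Finset.mem_insert, Fin.le_def, Fin.ext_iff,
          Fin.val_succ, Fin.coe_castSucc]
        omega
      have hcard2 : (consOf ((Finset.Iic i.succ).sup H)).card ≤ 2 * SMALL := by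
        rw [hins, Finset.sup_insert]
        have hun : consOf (H i.succ ⊔ (Finset.Iic i.castSucc).sup H)
            = consOf (H i.succ) ∪ consOf ((Finset.Iic i.castSucc).sup H) := by
          simp [consOf, Finset.sup_eq_union, Finset.image_union]
        rw [hun]
        have h1 := Finset.card_union_le (consOf (H i.succ))
          (consOf ((Finset.Iic i.castSucc).sup H))
        have h2 := hsmall i.succ
        omega
      have hpl := hPA _ (hsubSup _) (htauSup _) hcard2
      have hle : ((consOf ((Finset.Iic i.succ).sup H)).card : ℝ) ≤ (SMALL : ℝ) :=
        le_of_mul_le_mul_left (hpl.trans (hrev i.succ)) hζ0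
      exact_mod_cast hle
  have huniv : (Finset.univ : Finset (Fin (n+1))) = Finset.Iic (Fin.last n) := by
    ext a; simp [Fin.le_last]
  rw [huniv]
  exact key (Fin.last n)
end

section
/- Let S be a set of variable-vertices with |S| ≤ ζ·SMALL in a factor graph satisfying the Plausibility Assumption. Then the closure cl(S), defined as the union of all S-closed τ-subgraphs with at most SMALL constraint-vertices, has at most SMALL constraint-vertices and revenue at most |S|. -/
/-!
A union of `S`-closed subgraphs is `S`-closed, since a leaf of `A ∪ B` is already a leaf of `A`
or of `B`. An `S`-closed subgraph has its leaves in `S`, so its revenue is at most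
`|S| ≤ ζ·SMALL`; where plausibility applies (at most `2·SMALL` constraints) this gives
`ζ·|cons H| ≤ ζ·SMALL`, i.e. `|cons H| ≤ SMALL`. Building the closure one union at a time, each
new union has at most `SMALL + SMALL` constraints, so plausibility applies and it again has at most
`SMALL`.
-/

open scoped Classical
open Finset

open CSP

namespace CSP

variable {Cn Vr : Type*}

lemma degC_mono [DecidableEq Cn] {A B : Finset (Cn × Vr)} (h : A ⊆ B) (f : Cn) :
    degC A f ≤ degC B f :=
  card_le_card (filter_subset_filter _ h)

lemma degV_mono [DecidableEq Vr] {A B : Finset (Cn × Vr)} (h : A ⊆ B) (v : Vr) :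
    degV A v ≤ degV B v :=
  card_le_card (filter_subset_filter _ h)

lemma mem_vbls_iff_degV_pos [DecidableEq Vr] {H : Finset (Cn × Vr)} {v : Vr} :
    v ∈ vbls H ↔ 0 < degV H v := by
  simp [vbls, degV, card_pos, filter_nonempty_iff]

lemma mem_leaves_of_subset [DecidableEq Vr] {A B : Finset (Cn × Vr)} (h : A ⊆ B) {v : Vr}
    (hA : v ∈ vbls A) (hB : v ∈ leaves B) : v ∈ leaves A := by
  rw [leaves, mem_filter] at hB ⊢
  have hpos := mem_vbls_iff_degV_pos.mp hA
  exact ⟨hA, le_antisymm (hB.2 ▸ degV_mono h v) hpos⟩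

variable [DecidableEq Cn] [DecidableEq Vr]

lemma consOf_union (A B : Finset (Cn × Vr)) : consOf (A ∪ B) = consOf A ∪ consOf B :=
  image_union _ _

lemma card_consOf_union_le (A B : Finset (Cn × Vr)) :
    (consOf (A ∪ B)).card ≤ (consOf A).card + (consOf B).card :=
  consOf_union A B ▸ card_union_le _ _

lemma leaves_union_subset (A B : Finset (Cn × Vr)) :
    leaves (A ∪ B) ⊆ leaves A ∪ leaves B := by
  intro v hv
  have hvbls : v ∈ vbls A ∪ vbls B := by
    simpa only [leaves, vbls, image_union, mem_filter] using (mem_filter.mp hv).1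
  rw [mem_union] at hvbls ⊢
  exact hvbls.imp (mem_leaves_of_subset subset_union_left · hv)
    (mem_leaves_of_subset subset_union_right · hv)

lemma IsTau.union {τ : ℕ} {A B : Finset (Cn × Vr)} (hA : IsTau τ A) (hB : IsTau τ B) :
    IsTau τ (A ∪ B) := by
  intro f hf
  rcases mem_union.mp (consOf_union A B ▸ hf) with hf | hf
  · exact (hA f hf).trans (degC_mono subset_union_left f)
  · exact (hB f hf).trans (degC_mono subset_union_right f)

lemma SClosed.union {τ : ℕ} {S : Finset Vr} {A B : Finset (Cn × Vr)}
    (hA : SClosed τ S A) (hB : SClosed τ S B) : SClosed τ S (A ∪ B) :=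
  ⟨hA.1.union hB.1, (leaves_union_subset A B).trans (union_subset hA.2 hB.2)⟩

lemma sClosed_empty (τ : ℕ) (S : Finset Vr) : SClosed τ S (∅ : Finset (Cn × Vr)) :=
  ⟨by simp [IsTau, consOf], by simp [leaves, vbls]⟩

lemma revenue_le_card_leaves (τ : ℕ) (H : Finset (Cn × Vr)) :
    revenue τ H ≤ (leaves H).card :=
  sub_le_self _ (Nat.cast_nonneg _)

lemma SClosed.revenue_le_card {τ : ℕ} {S : Finset Vr} {H : Finset (Cn × Vr)}
    (hH : SClosed τ S H) : revenue τ H ≤ S.card :=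
  (revenue_le_card_leaves τ H).trans (by exact_mod_cast card_le_card hH.2)

lemma SClosed.card_consOf_le {τ SMALL : ℕ} {ζ : ℝ} (hζ0 : 0 < ζ) {E : Finset (Cn × Vr)}
    (hPA : PlausibilityAssumption τ ζ SMALL E) {S : Finset Vr} (hS : (S.card : ℝ) ≤ ζ * SMALL)
    {H : Finset (Cn × Vr)} (hHE : H ⊆ E) (hH : SClosed τ S H)
    (hc : (consOf H).card ≤ 2 * SMALL) : (consOf H).card ≤ SMALL := by
  have h : ζ * (consOf H).card ≤ ζ * SMALL :=
    calc ζ * (consOf H).card ≤ revenue τ H := hPA H hHE hH.1 hc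
      _ ≤ S.card := hH.revenue_le_card
      _ ≤ ζ * SMALL := hS
  exact_mod_cast le_of_mul_le_mul_left h hζ0

lemma closure_spec {τ SMALL : ℕ} {ζ : ℝ} (hζ0 : 0 < ζ) {E : Finset (Cn × Vr)}
    (hPA : PlausibilityAssumption τ ζ SMALL E) {S : Finset Vr} (hS : (S.card : ℝ) ≤ ζ * SMALL) :
    closure τ SMALL E S ⊆ E ∧ SClosed τ S (closure τ SMALL E S) ∧
      (consOf (closure τ SMALL E S)).card ≤ SMALL := by
  refine sup_induction (p := fun U => U ⊆ E ∧ SClosed τ S U ∧ (consOf U).card ≤ SMALL) ?_ ?_ ?_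
  · exact ⟨empty_subset _, sClosed_empty τ S, by simp [consOf]⟩
  · rintro A ⟨hAE, hA, hAc⟩ B ⟨hBE, hB, hBc⟩
    have hUE := union_subset hAE hBE
    have hU := hA.union hB
    refine ⟨hUE, hU, hU.card_consOf_le hζ0 hPA hS hUE ?_⟩
    exact (card_consOf_union_le A B).trans (by omega)
  · intro H hH
    rw [mem_filter, mem_powerset] at hH
    exact ⟨hH.1, hH.2⟩

end CSP

theorem stmt_4_general {Cn Vr : Type*} [DecidableEq Cn] [DecidableEq Vr]
    (τ SMALL : ℕ)
    (ζ : ℝ) (hζ0 : 0 < ζ)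
    (E : Finset (Cn × Vr)) (hPA : PlausibilityAssumption τ ζ SMALL E)
    (S : Finset Vr) (hS : (S.card : ℝ) ≤ ζ * SMALL) :
    (consOf (closure τ SMALL E S)).card ≤ SMALL ∧
      revenue τ (closure τ SMALL E S) ≤ (S.card : ℝ) := by
  obtain ⟨-, hcl, hc⟩ := closure_spec hζ0 hPA hS
  exact ⟨hc, hcl.revenue_le_card⟩

/-- If `|S| ≤ ζ·SMALL` and the factor graph satisfies the Plausibility Assumption, then
the closure `cl(S)` has at most `SMALL` constraint-vertices and revenue at most `|S|`. -/
theorem stmt_4 {Cn Vr : Type*} [Fintype Cn] [Fintype Vr] [DecidableEq Cn] [DecidableEq Vr]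
    (τ SMALL : ℕ) (hτ : 3 ≤ τ) (hSMALL : 1 ≤ SMALL)
    (ζ : ℝ) (hζ0 : 0 < ζ) (hζ1 : ζ < 1)
    (E : Finset (Cn × Vr)) (hPA : PlausibilityAssumption τ ζ SMALL E)
    (S : Finset Vr) (hS : (S.card : ℝ) ≤ ζ * SMALL) :
    (consOf (closure τ SMALL E S)).card ≤ SMALL ∧
      revenue τ (closure τ SMALL E S) ≤ (S.card : ℝ) :=
  stmt_4_general τ SMALL ζ hζ0 E hPA S hS
end

section
/- Consider a small subgraph H of a factor graph where each constraint-vertex f independently draws an assignment w_f ∈ Ω^{N(f)} from a (τ−1)-wise uniform distribution μ_f. Assume every τ-subgraph of H with at most 2·SMALL constraints is plausible with parameter ζ > 0 (so the only plausible ∅-closed τ-subgraph is empty). Then the probability that all suggestions are consistent (i.e., for every variable-vertex, all adjacent constraints suggest the same value) equals q^{v − e}, where q = |Ω|, v is the number of variable-vertices of H, and e is the number of edges of H. -/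
open scoped Classical
open Finset
open Finset

lemma negone_powerset {α : Type*} [DecidableEq α] (A : Finset α) (hA : A.Nonempty) :
    ∑ T ∈ A.powerset, (-1 : ℝ) ^ (A \ T).card = 0 := by
  have h := Finset.prod_add (fun _ : α => (1:ℝ)) (fun _ : α => (-1:ℝ)) A
  simp only [Finset.prod_const, one_pow, one_mul] at h
  rw [← h]
  have : ((1:ℝ) + -1) = 0 := by norm_num
  rw [this]
  exact zero_pow (Finset.card_ne_zero.2 hA)

lemma chi_sum {Ω : Type*} [Fintype Ω] [DecidableEq Ω] (w : Ω) :
    ∑ a : Ω, ((Fintype.card Ω : ℝ) * (if w = a then 1 else 0) - 1) = 0 := by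
  simp [Finset.sum_sub_distrib, ← Finset.mul_sum, Finset.sum_ite_eq, Finset.card_univ]

lemma sum_update_zero {V Ω : Type*} [Fintype V] [Fintype Ω] [DecidableEq V] [Nonempty Ω]
    (x₀ : V) (h : (V → Ω) → ℝ)
    (h0 : ∀ c : V → Ω, ∑ a : Ω, h (Function.update c x₀ a) = 0) :
    ∑ c : V → Ω, h c = 0 := by
  classical
  set φ : ((V → Ω) × Ω) → ((V → Ω) × Ω) :=
    fun p => (Function.update p.1 x₀ p.2, p.1 x₀) with hφdef
  have hinv : Function.Involutive φ := by
    intro p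
    simp [hφdef, Function.update_idem, Function.update_eq_self]
  have key : ∑ p : (V → Ω) × Ω, h (Function.update p.1 x₀ p.2)
      = ∑ p : (V → Ω) × Ω, h p.1 :=
    hinv.bijective.sum_comp (fun p : (V → Ω) × Ω => h p.1)
  have left : ∑ p : (V → Ω) × Ω, h (Function.update p.1 x₀ p.2) = 0 := by
    rw [Fintype.sum_prod_type]
    simp [h0]
  have right : ∑ p : (V → Ω) × Ω, h p.1 = (Fintype.card Ω : ℝ) * ∑ c : V → Ω, h c := by
    rw [Fintype.sum_prod_type]
    simp [Finset.sum_const, mul_comm, Finset.mul_sum, Finset.card_univ]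
  rw [key, right] at left
  have hne : (Fintype.card Ω : ℝ) ≠ 0 := by exact_mod_cast Fintype.card_ne_zero
  exact (mul_eq_zero.1 left).resolve_left hne

/-- Expectation of a nonempty product of χ's under a wise-uniform distribution vanishes. -/
lemma expectation_zero {V Ω : Type*} [Fintype V] [Fintype Ω] [DecidableEq V] [DecidableEq Ω]
    [Nonempty Ω]
    (μ : (V → Ω) → ℝ) (A : Finset V) (hA : A.Nonempty) (c : V → Ω)
    (hunif : ∀ T ⊆ A, ∀ y : V → Ω,
      ∑ u ∈ Finset.univ.filter (fun u : V → Ω => ∀ i ∈ T, u i = y i), μ u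
        = (1 / (Fintype.card Ω : ℝ)) ^ T.card) :
    ∑ u : V → Ω, μ u * ∏ x ∈ A, ((Fintype.card Ω : ℝ) * (if u x = c x then 1 else 0) - 1)
      = 0 := by
  classical
  set q : ℝ := (Fintype.card Ω : ℝ) with hq
  have hqne : q ≠ 0 := by rw [hq]; exact_mod_cast Fintype.card_ne_zero
  have hexp : ∀ u : V → Ω,
      ∏ x ∈ A, (q * (if u x = c x then 1 else 0) - 1)
        = ∑ T ∈ A.powerset, (q ^ T.card * (if ∀ x ∈ T, u x = c x then 1 else 0))
            * (-1 : ℝ) ^ (A \ T).card := by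
    intro u
    have := Finset.prod_add (fun x : V => q * (if u x = c x then 1 else 0))
      (fun _ : V => (-1 : ℝ)) A
    simp only [← sub_eq_add_neg] at this
    rw [this]
    refine Finset.sum_congr rfl fun T _ => ?_
    rw [Finset.prod_mul_distrib, Finset.prod_const, Finset.prod_const, Finset.prod_boole]
    convert rfl
  calc ∑ u : V → Ω, μ u * ∏ x ∈ A, (q * (if u x = c x then 1 else 0) - 1)
      = ∑ T ∈ A.powerset, ∑ u : V → Ω,
          μ u * ((q ^ T.card * (if ∀ x ∈ T, u x = c x then 1 else 0))
            * (-1 : ℝ) ^ (A \ T).card) := by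
        simp_rw [hexp, Finset.mul_sum]
        rw [Finset.sum_comm]
    _ = ∑ T ∈ A.powerset, (-1 : ℝ) ^ (A \ T).card := by
        refine Finset.sum_congr rfl fun T hT => ?_
        have hfil : ∑ u : V → Ω, μ u * (if ∀ x ∈ T, u x = c x then 1 else 0)
            = (1 / q) ^ T.card := by
          rw [← hunif T (Finset.mem_powerset.1 hT) c]
          rw [Finset.sum_filter]
          refine Finset.sum_congr rfl fun u _ => ?_
          by_cases h : ∀ x ∈ T, u x = c x <;> simp [h]
        calc ∑ u : V → Ω, μ u * ((q ^ T.card * (if ∀ x ∈ T, u x = c x then 1 else 0))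
              * (-1 : ℝ) ^ (A \ T).card)
            = (q ^ T.card * ∑ u : V → Ω, μ u * (if ∀ x ∈ T, u x = c x then 1 else 0))
                * (-1 : ℝ) ^ (A \ T).card := by
              rw [Finset.mul_sum, Finset.sum_mul]
              refine Finset.sum_congr rfl fun u _ => by ring
          _ = (-1 : ℝ) ^ (A \ T).card := by
              rw [hfil]
              have : q ^ T.card * (1 / q) ^ T.card = 1 := by
                rw [← mul_pow, mul_one_div, div_self hqne, one_pow]
              rw [this, one_mul]
    _ = 0 := negone_powerset A hA


open Finset

open CSP

/-- Consistency probability of the planted distribution: for a small factor graph whose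
constraints `f` have neighborhoods `N f` (of size ≥ τ−1) and draw suggestions from
`(τ−1)`-wise uniform distributions `μ f`, assuming every τ-subgraph with at most
`2·SMALL` constraints is plausible, the probability that all suggestions are consistent
equals `q^{v−e}` where `q = |Ω|`, `v` is the number of variable-vertices and `e` the
number of edges — independently of the distributions `μ f`. -/
theorem stmt_10 {C V Ω : Type*} [Fintype C] [Fintype V] [Fintype Ω]
    [DecidableEq C] [DecidableEq V] [DecidableEq Ω] [Nonempty Ω]
    (τ SMALL : ℕ) (hτ : 3 ≤ τ) (ζ : ℝ) (hζ0 : 0 < ζ) (hζ1 : ζ < 1)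
    (N : C → Finset V)
    (hdeg : ∀ f, τ - 1 ≤ (N f).card)
    (hcover : ∀ x : V, ∃ f, x ∈ N f)
    (hsmall : Fintype.card C ≤ SMALL)
    (Eset : Finset (C × V)) (hE : Eset = Finset.univ.filter fun p => p.2 ∈ N p.1)
    (hPA : PlausibilityAssumption τ ζ SMALL Eset)
    (μ : C → (V → Ω) → ℝ)
    (hμ0 : ∀ f w, 0 ≤ μ f w) (hμ1 : ∀ f, ∑ w, μ f w = 1)
    (huniform : ∀ f, ∀ A ⊆ N f, A.card ≤ τ - 1 → ∀ y : V → Ω,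
      ∑ w ∈ Finset.univ.filter (fun w : V → Ω => ∀ i ∈ A, w i = y i), μ f w
        = (1 / (Fintype.card Ω : ℝ)) ^ A.card) :
    ∑ w : C → V → Ω,
        (∏ f, μ f (w f)) *
          (if ∀ (f g : C) (x : V), x ∈ N f → x ∈ N g → w f x = w g x then 1 else 0)
      = (Fintype.card Ω : ℝ) ^ ((Fintype.card V : ℤ) - ∑ f : C, ((N f).card : ℤ)) := by
  classical
  set q : ℝ := (Fintype.card Ω : ℝ) with hqdef
  have hqpos : (0:ℝ) < q := by rw [hqdef]; exact_mod_cast Fintype.card_pos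
  have hqne : q ≠ 0 := ne_of_gt hqpos
  set Fx : V → Finset C := fun x => Finset.univ.filter fun f => x ∈ N f with hFx
  set e : ℕ := ∑ f : C, (N f).card with he
  have hFxmem : ∀ x f, f ∈ Fx x ↔ x ∈ N f := by intro x f; simp [hFx]
  have hsum_e : ∑ x : V, (Fx x).card = e := by
    rw [he]
    simp only [hFx]
    calc ∑ x : V, #(Finset.univ.filter fun f => x ∈ N f)
        = ∑ x : V, ∑ f : C, if x ∈ N f then 1 else 0 := by
          refine Finset.sum_congr rfl fun x _ => ?_
          rw [Finset.card_filter]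
      _ = ∑ f : C, ∑ x : V, if x ∈ N f then 1 else 0 := Finset.sum_comm
      _ = ∑ f : C, #(N f) := by
          refine Finset.sum_congr rfl fun f _ => ?_
          rw [← Finset.card_filter, Finset.filter_univ_mem]
  have h2 : ∀ w : C → V → Ω,
      (if (∀ f g x, x ∈ N f → x ∈ N g → w f x = w g x) then (1:ℝ) else 0) * q ^ e
        = ∏ x : V, ∑ c : Ω, ∏ f ∈ Fx x, (q * (if w f x = c then 1 else 0)) := by
    intro w
    have hx : ∀ x : V, ∑ c : Ω, ∏ f ∈ Fx x, (q * (if w f x = c then 1 else 0))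
        = q ^ (Fx x).card * (if ∀ f ∈ Fx x, ∀ g ∈ Fx x, w f x = w g x then 1 else 0) := by
      intro x
      obtain ⟨f₀, hf₀⟩ := hcover x
      have hf₀' : f₀ ∈ Fx x := (hFxmem x f₀).2 hf₀
      have hc : ∀ c : Ω, ∏ f ∈ Fx x, (q * (if w f x = c then 1 else 0))
          = q ^ (Fx x).card * (if ∀ f ∈ Fx x, w f x = c then 1 else 0) := by
        intro c
        rw [Finset.prod_mul_distrib, Finset.prod_const, Finset.prod_boole]
        convert rfl
      simp_rw [hc]
      rw [← Finset.mul_sum]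
      congr 1
      by_cases hpair : ∀ f ∈ Fx x, ∀ g ∈ Fx x, w f x = w g x
      · rw [if_pos hpair]
        have hiff : ∀ c : Ω, (∀ f ∈ Fx x, w f x = c) ↔ c = w f₀ x := by
          intro c
          constructor
          · intro h; exact (h f₀ hf₀').symm
          · rintro rfl f hf; exact hpair f hf f₀ hf₀'
        calc ∑ c : Ω, (if ∀ f ∈ Fx x, w f x = c then (1:ℝ) else 0)
            = ∑ c : Ω, (if c = w f₀ x then (1:ℝ) else 0) := by
              refine Finset.sum_congr rfl fun c _ => ?_
              exact if_congr (hiff c) rfl rfl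
          _ = 1 := by rw [Finset.sum_ite_eq' Finset.univ (w f₀ x) (fun _ => (1:ℝ))]; simp
      · rw [if_neg hpair]
        refine Finset.sum_eq_zero fun c _ => ?_
        rw [if_neg]
        intro h
        exact hpair fun f hf g hg => (h f hf).trans (h g hg).symm
    simp_rw [hx]
    rw [Finset.prod_mul_distrib, Finset.prod_pow_eq_pow_sum, hsum_e, Finset.prod_boole]
    rw [mul_comm]
    congr 1
    by_cases hcond : ∀ f g x, x ∈ N f → x ∈ N g → w f x = w g x
    · rw [if_pos hcond, if_pos]
      intro x _ f hf g hg
      exact hcond f g x ((hFxmem x f).1 hf) ((hFxmem x g).1 hg)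
    · rw [if_neg hcond, if_neg]
      intro h
      exact hcond fun f g x hf hg =>
        h x (Finset.mem_univ x) f ((hFxmem x f).2 hf) g ((hFxmem x g).2 hg)
  set T : V → (Ω × Finset C) → (C → V → Ω) → ℝ := fun x p w =>
    if p.2 ⊆ Fx x then ∏ f ∈ p.2, (q * (if w f x = p.1 then 1 else 0) - 1) else 0 with hT
  have h1 : ∀ (w : C → V → Ω) (x : V),
      ∑ c : Ω, ∏ f ∈ Fx x, (q * (if w f x = c then 1 else 0))
        = ∑ p : Ω × Finset C, T x p w := by
    intro w x
    rw [Fintype.sum_prod_type]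
    refine Finset.sum_congr rfl fun c _ => ?_
    calc ∏ f ∈ Fx x, (q * (if w f x = c then (1:ℝ) else 0))
        = ∏ f ∈ Fx x, ((q * (if w f x = c then (1:ℝ) else 0) - 1) + 1) := by
          refine Finset.prod_congr rfl fun f _ => by ring
      _ = ∑ S ∈ (Fx x).powerset, ∏ f ∈ S, (q * (if w f x = c then (1:ℝ) else 0) - 1) := by
          rw [Finset.prod_add]
          simp
      _ = ∑ S : Finset C, T x (c, S) w := by
          simp only [hT]
          rw [← Finset.sum_filter]
          refine (Finset.sum_congr ?_ fun S _ => rfl)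
          ext S
          simp [Finset.mem_powerset]
  have hkey : ∀ S : V → Finset C,
      (∑ c : V → Ω, ∑ w : C → V → Ω, (∏ f, μ f (w f)) * ∏ x : V, T x (c x, S x) w)
        = if ∀ x, S x = ∅ then q ^ Fintype.card V else 0 := by
    intro S
    by_cases hS : ∀ x, S x ⊆ Fx x
    · -- main case
      set Bf : C → Finset V := fun f => Finset.univ.filter fun x => f ∈ S x with hBf
      have hBfN : ∀ f, Bf f ⊆ N f := by
        intro f x hx
        simp only [hBf, Finset.mem_filter] at hx
        exact (hFxmem x f).1 (hS x hx.2)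
      have hTprod : ∀ (c : V → Ω) (w : C → V → Ω),
          ∏ x : V, T x (c x, S x) w
            = ∏ f : C, ∏ x ∈ Bf f, (q * (if w f x = c x then 1 else 0) - 1) := by
        intro c w
        have hx : ∀ x : V, T x (c x, S x) w
            = ∏ f ∈ S x, (q * (if w f x = c x then 1 else 0) - 1) := by
          intro x; simp only [hT]; rw [if_pos (hS x)]
        simp_rw [hx]
        refine Finset.prod_comm' ?_
        intro x f
        simp [hBf]
      set Ef : C → (V → Ω) → ℝ := fun f c => ∑ u : V → Ω,
        μ f u * ∏ x ∈ Bf f, (q * (if u x = c x then 1 else 0) - 1) with hEf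
      have hfac : ∀ c : V → Ω,
          (∑ w : C → V → Ω, (∏ f, μ f (w f)) * ∏ x : V, T x (c x, S x) w)
            = ∏ f : C, Ef f c := by
        intro c
        calc ∑ w : C → V → Ω, (∏ f, μ f (w f)) * ∏ x : V, T x (c x, S x) w
            = ∑ w : C → V → Ω, ∏ f : C,
                (μ f (w f) * ∏ x ∈ Bf f, (q * (if w f x = c x then 1 else 0) - 1)) := by
              refine Finset.sum_congr rfl fun w _ => ?_
              rw [hTprod c w, Finset.prod_mul_distrib]
          _ = ∏ f : C, Ef f c := by
              simp only [hEf]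
              rw [Finset.prod_univ_sum (fun _ => (Finset.univ : Finset (V → Ω)))
                (fun f u => μ f u * ∏ x ∈ Bf f, (q * (if u x = c x then 1 else 0) - 1))]
              rw [Fintype.piFinset_univ]
      simp_rw [hfac]
      by_cases hmid : ∃ f, (Bf f).Nonempty ∧ (Bf f).card < τ
      · obtain ⟨f₁, hne, hlt⟩ := hmid
        have hEzero : ∀ c : V → Ω, Ef f₁ c = 0 := by
          intro c
          refine expectation_zero (μ f₁) (Bf f₁) hne c ?_
          intro Tt hTt y
          have h1 : Tt ⊆ N f₁ := hTt.trans (hBfN f₁)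
          have h2 : Tt.card ≤ τ - 1 := by
            have := Finset.card_le_card hTt
            omega
          exact huniform f₁ Tt h1 h2 y
        obtain ⟨x₂, hx₂⟩ := hne
        have hx₂' : f₁ ∈ S x₂ := by
          simp only [hBf, Finset.mem_filter] at hx₂
          exact hx₂.2
        rw [if_neg]
        · refine Finset.sum_eq_zero fun c _ => ?_
          exact Finset.prod_eq_zero (Finset.mem_univ f₁) (hEzero c)
        · intro h
          rw [h x₂] at hx₂'
          exact absurd hx₂' (Finset.notMem_empty f₁)
      · push_neg at hmid
        by_cases hemp : ∀ x, S x = ∅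
        · rw [if_pos hemp]
          have hBfe : ∀ f, Bf f = ∅ := by
            intro f
            simp only [hBf]
            rw [Finset.filter_eq_empty_iff]
            intro x _
            rw [hemp x]
            exact Finset.notMem_empty f
          have hone : ∀ c : V → Ω, ∏ f : C, Ef f c = 1 := by
            intro c
            refine Finset.prod_eq_one fun f _ => ?_
            simp only [hEf, hBfe f]
            simp [hμ1 f]
          rw [Finset.sum_congr rfl fun c _ => hone c]
          rw [Finset.sum_const, Finset.card_univ, Fintype.card_fun]
          rw [hqdef]
          push_cast
          ring
        · rw [if_neg hemp]
          push_neg at hemp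
          obtain ⟨x₀, hx₀⟩ := hemp
          obtain ⟨f₀, hf₀⟩ := hx₀
          -- the subgraph H
          set H : Finset (C × V) := Eset.filter (fun p => p.1 ∈ S p.2) with hHdef
          have hmemH : ∀ p : C × V, p ∈ H ↔ p.1 ∈ S p.2 := by
            intro p
            simp only [hHdef, Finset.mem_filter, hE, Finset.mem_univ, true_and]
            constructor
            · exact fun h => h.2
            · intro h
              exact ⟨(hFxmem p.2 p.1).1 (hS p.2 h), h⟩
          have hdegV : ∀ x : V, degV H x = (S x).card := by
            intro x
            rw [CSP.degV]
            rw [show H.filter (fun p => p.2 = x) = (S x).image (fun f => (f, x)) by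
              ext p
              simp only [Finset.mem_filter, Finset.mem_image, hmemH]
              constructor
              · rintro ⟨h1, h2⟩
                exact ⟨p.1, by rwa [h2] at h1, by rw [← h2]⟩
              · rintro ⟨f, hf, rfl⟩
                exact ⟨hf, rfl⟩]
            rw [Finset.card_image_of_injective _ (fun a b hab => congrArg Prod.fst hab)]
          have hdegC : ∀ f : C, degC H f = (Bf f).card := by
            intro f
            rw [CSP.degC]
            rw [show H.filter (fun p => p.1 = f) = (Bf f).image (fun x => (f, x)) by
              ext p
              simp only [Finset.mem_filter, Finset.mem_image, hmemH, hBf, Finset.mem_univ,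
                true_and]
              constructor
              · rintro ⟨h1, h2⟩
                exact ⟨p.2, by rwa [h2] at h1, by rw [← h2]⟩
              · rintro ⟨x, hx, rfl⟩
                exact ⟨hx, rfl⟩]
            rw [Finset.card_image_of_injective _ (fun a b hab => congrArg Prod.snd hab)]
          have hTau : IsTau τ H := by
            intro f hf
            rw [CSP.consOf] at hf
            obtain ⟨p, hp, rfl⟩ := Finset.mem_image.1 hf
            have : p.2 ∈ Bf p.1 := by
              simp only [hBf, Finset.mem_filter]
              exact ⟨Finset.mem_univ _, (hmemH p).1 hp⟩
            rw [hdegC]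
            exact hmid p.1 ⟨p.2, this⟩
          have hPl : Plausible τ ζ H := by
            refine hPA H (Finset.filter_subset _ _) hTau ?_
            have h1 : (consOf H).card ≤ Fintype.card C := Finset.card_le_univ _
            omega
          have hconsne : (consOf H).Nonempty := by
            refine ⟨f₀, ?_⟩
            rw [CSP.consOf]
            exact Finset.mem_image.2 ⟨(f₀, x₀), (hmemH (f₀, x₀)).2 hf₀, rfl⟩
          have hleafpos : (0:ℝ) < ((leaves H).card : ℝ) := by
            have h1 : ζ * ((consOf H).card : ℝ) ≤ revenue τ H := hPl
            have h2 : revenue τ H ≤ ((leaves H).card : ℝ) :=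
              sub_le_self _ (Nat.cast_nonneg _)
            have h3 : (0:ℝ) < ζ * ((consOf H).card : ℝ) :=
              mul_pos hζ0 (by exact_mod_cast Finset.card_pos.2 hconsne)
            linarith
          have hleafne : (leaves H).Nonempty := by
            rw [← Finset.card_pos]
            exact_mod_cast hleafpos
          obtain ⟨x₁, hx₁⟩ := hleafne
          have hdeg1 : (S x₁).card = 1 := by
            rw [CSP.leaves, Finset.mem_filter] at hx₁
            rw [← hdegV]
            exact hx₁.2
          obtain ⟨f₁, hf₁⟩ := Finset.card_eq_one.1 hdeg1
          have hx₁Bf : x₁ ∈ Bf f₁ := by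
            simp only [hBf, Finset.mem_filter, hf₁]
            exact ⟨Finset.mem_univ _, Finset.mem_singleton_self f₁⟩
          have hnotBf : ∀ f, f ≠ f₁ → x₁ ∉ Bf f := by
            intro f hf hmem
            simp only [hBf, Finset.mem_filter, hf₁, Finset.mem_singleton] at hmem
            exact hf hmem.2
          refine sum_update_zero x₁ (fun c => ∏ f : C, Ef f c) ?_
          intro c
          have hEother : ∀ f, f ≠ f₁ → ∀ a : Ω,
              Ef f (Function.update c x₁ a) = Ef f c := by
            intro f hf a
            simp only [hEf]
            refine Finset.sum_congr rfl fun u _ => ?_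
            congr 1
            refine Finset.prod_congr rfl fun x hx => ?_
            have hxne : x ≠ x₁ := fun h => hnotBf f hf (h ▸ hx)
            rw [Function.update_of_ne hxne]
          have hsplit : ∀ a : Ω, ∏ f : C, Ef f (Function.update c x₁ a)
              = Ef f₁ (Function.update c x₁ a) * ∏ f ∈ Finset.univ.erase f₁, Ef f c := by
            intro a
            rw [← Finset.mul_prod_erase Finset.univ _ (Finset.mem_univ f₁)]
            congr 1
            exact Finset.prod_congr rfl fun f hf => hEother f (Finset.ne_of_mem_erase hf) a
          have hEf₁ : ∑ a : Ω, Ef f₁ (Function.update c x₁ a) = 0 := by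
            simp only [hEf]
            rw [Finset.sum_comm]
            refine Finset.sum_eq_zero fun u _ => ?_
            rw [← Finset.mul_sum]
            have hprod : ∀ a : Ω,
                ∏ x ∈ Bf f₁, (q * (if u x = Function.update c x₁ a x then 1 else 0) - 1)
                  = (q * (if u x₁ = a then 1 else 0) - 1)
                    * ∏ x ∈ (Bf f₁).erase x₁, (q * (if u x = c x then 1 else 0) - 1) := by
              intro a
              rw [← Finset.mul_prod_erase (Bf f₁) _ hx₁Bf]
              congr 1
              · rw [Function.update_self]
              · exact Finset.prod_congr rfl fun x hx => by
                  rw [Function.update_of_ne (Finset.ne_of_mem_erase hx)]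
            rw [Finset.sum_congr rfl fun a _ => hprod a]
            rw [← Finset.sum_mul]
            have hchi := chi_sum (u x₁)
            rw [← hqdef] at hchi
            rw [hchi, zero_mul, mul_zero]
          calc ∑ a : Ω, ∏ f : C, Ef f (Function.update c x₁ a)
              = ∑ a : Ω, Ef f₁ (Function.update c x₁ a)
                  * ∏ f ∈ Finset.univ.erase f₁, Ef f c :=
                Finset.sum_congr rfl fun a _ => hsplit a
            _ = (∑ a : Ω, Ef f₁ (Function.update c x₁ a))
                  * ∏ f ∈ Finset.univ.erase f₁, Ef f c := (Finset.sum_mul _ _ _).symm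
            _ = 0 := by rw [hEf₁, zero_mul]
    · -- some S x is not contained in Fx x : everything vanishes
      have hx₀ := not_forall.1 hS
      obtain ⟨x₀, hx₀⟩ := hx₀
      rw [if_neg (fun h => hx₀ (by rw [h x₀]; exact Finset.empty_subset _))]
      refine Finset.sum_eq_zero fun c _ => Finset.sum_eq_zero fun w _ => ?_
      have : T x₀ (c x₀, S x₀) w = 0 := by
        simp only [hT]
        rw [if_neg hx₀]
      rw [Finset.prod_eq_zero (Finset.mem_univ x₀) this, mul_zero]

  have main : (∑ w : C → V → Ω, (∏ f, μ f (w f)) *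
      (if ∀ (f g : C) (x : V), x ∈ N f → x ∈ N g → w f x = w g x then (1:ℝ) else 0)) * q ^ e
      = q ^ Fintype.card V := by
    calc (∑ w : C → V → Ω, (∏ f, μ f (w f)) *
        (if ∀ (f g : C) (x : V), x ∈ N f → x ∈ N g → w f x = w g x then (1:ℝ) else 0)) * q ^ e
        = ∑ w : C → V → Ω, (∏ f, μ f (w f)) *
            ((if ∀ (f g : C) (x : V), x ∈ N f → x ∈ N g → w f x = w g x then (1:ℝ) else 0)
              * q ^ e) := by
          rw [Finset.sum_mul]
          exact Finset.sum_congr rfl fun w _ => by ring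
      _ = ∑ w : C → V → Ω, (∏ f, μ f (w f)) * ∏ x : V, ∑ p : Ω × Finset C, T x p w := by
          refine Finset.sum_congr rfl fun w _ => ?_
          rw [h2 w]
          congr 1
          exact Finset.prod_congr rfl fun x _ => h1 w x
      _ = ∑ w : C → V → Ω, (∏ f, μ f (w f)) *
            ∑ g : V → Ω × Finset C, ∏ x : V, T x (g x) w := by
          refine Finset.sum_congr rfl fun w _ => ?_
          congr 1
          rw [Finset.prod_univ_sum (fun _ => (Finset.univ : Finset (Ω × Finset C)))
            (fun x p => T x p w)]
          rw [Fintype.piFinset_univ]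
      _ = ∑ g : V → Ω × Finset C, ∑ w : C → V → Ω,
            (∏ f, μ f (w f)) * ∏ x : V, T x (g x) w := by
          simp_rw [Finset.mul_sum]
          exact Finset.sum_comm
      _ = ∑ p : (V → Ω) × (V → Finset C), ∑ w : C → V → Ω,
            (∏ f, μ f (w f)) * ∏ x : V, T x (p.1 x, p.2 x) w := by
          rw [← Equiv.sum_comp (Equiv.arrowProdEquivProdArrow V (fun _ => Ω) (fun _ => Finset C)).symm
            (fun g : V → Ω × Finset C => ∑ w : C → V → Ω,
              (∏ f, μ f (w f)) * ∏ x : V, T x (g x) w)]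
          rfl
      _ = ∑ S : V → Finset C, ∑ c : V → Ω, ∑ w : C → V → Ω,
            (∏ f, μ f (w f)) * ∏ x : V, T x (c x, S x) w := by
          rw [Fintype.sum_prod_type_right]
      _ = ∑ S : V → Finset C, (if ∀ x, S x = ∅ then q ^ Fintype.card V else 0) :=
          Finset.sum_congr rfl fun S _ => hkey S
      _ = q ^ Fintype.card V := by
          rw [Fintype.sum_eq_single (fun _ => (∅ : Finset C))]
          · rw [if_pos fun _ => rfl]
          · intro S hS
            rw [if_neg]
            intro h
            exact hS (funext h)
  have hecast : ∑ f : C, ((N f).card : ℤ) = (e : ℤ) := by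
    rw [he]
    push_cast
    rfl
  rw [hecast, zpow_sub₀ hqne, zpow_natCast, zpow_natCast,
    eq_div_iff (pow_ne_zero e hqne)]
  exact main
end

section
/- Let P : {0,1}^3 → {0,1} be the 1-in-3-SAT predicate (P(x) = 1 iff exactly one of the three inputs is 1). Then the minimum, over all pairwise-uniform distributions μ on {0,1}^3 and all distributions σ supported on satisfying assignments of P, of the total variation distance between μ and σ, equals 1/4. -/
open Finset

/-
The optimum is attained by `μ` uniform on the four odd-weight strings and `σ` uniform on the three
weight-one strings: every pair of coordinates takes each value on exactly one odd-weight string,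
and since the support of `σ` lies inside that of `μ`, their distance is `1 - 3/4`.
Conversely, for any pairwise-uniform `μ` the event `x₀ = x₁ = 1` has `μ`-mass `1/4` and
`σ`-mass `0`, and the total variation distance dominates the discrepancy on any single event.
-/

section TotalVariation

variable {α : Type*} [Fintype α]

theorem two_mul_sum_sub_le_sum_abs_sub (μ σ : α → ℝ) (s : Finset α) (h : ∑ x, μ x = ∑ x, σ x) :
    2 * ∑ x ∈ s, (μ x - σ x) ≤ ∑ x, |μ x - σ x| := by
  classical
  have hsplit := sum_add_sum_compl s fun x => μ x - σ x
  have habs := sum_add_sum_compl s fun x => |μ x - σ x|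
  have hin : ∑ x ∈ s, (μ x - σ x) ≤ ∑ x ∈ s, |μ x - σ x| :=
    sum_le_sum fun x _ => le_abs_self _
  have hout : -∑ x ∈ sᶜ, (μ x - σ x) ≤ ∑ x ∈ sᶜ, |μ x - σ x| := by
    rw [← sum_neg_distrib]
    exact sum_le_sum fun x _ => neg_le_abs _
  have htotal : ∑ x, (μ x - σ x) = 0 := by rw [sum_sub_distrib, h, sub_self]
  linarith

variable [DecidableEq α]

noncomputable def uniformOn (s : Finset α) (x : α) : ℝ :=
  if x ∈ s then (#s : ℝ)⁻¹ else 0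

omit [Fintype α] in
theorem uniformOn_nonneg (s : Finset α) (x : α) : 0 ≤ uniformOn s x := by
  unfold uniformOn
  split_ifs <;> positivity

omit [Fintype α] in
theorem uniformOn_of_notMem {s : Finset α} {x : α} (hx : x ∉ s) : uniformOn s x = 0 :=
  if_neg hx

theorem sum_filter_uniformOn (s : Finset α) (p : α → Prop) [DecidablePred p] :
    ∑ x ∈ univ.filter p, uniformOn s x = #(s.filter p) / #s := by
  simp only [uniformOn, ← sum_filter, filter_filter]
  rw [sum_const, nsmul_eq_mul, div_eq_mul_inv]
  congr 3
  ext x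
  simp [and_comm]

theorem sum_uniformOn {s : Finset α} (hs : s.Nonempty) : ∑ x, uniformOn s x = 1 := by
  have := sum_filter_uniformOn s fun _ => True
  rw [filter_true, filter_true, div_self (by exact_mod_cast hs.card_pos.ne')] at this
  exact this

theorem half_sum_abs_sub_uniformOn_of_subset {s t : Finset α} (hts : t ⊆ s) (ht : t.Nonempty) :
    1 / 2 * ∑ x, |uniformOn s x - uniformOn t x| = 1 - #t / #s := by
  have hs : (0 : ℝ) < #s := by exact_mod_cast (ht.mono hts).card_pos
  have htpos : (0 : ℝ) < #t := by exact_mod_cast ht.card_pos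
  have hle : (#t : ℝ) ≤ #s := by exact_mod_cast card_le_card hts
  have houtside : ∀ x ∉ s, |uniformOn s x - uniformOn t x| = 0 := fun x hx => by
    rw [uniformOn, uniformOn, if_neg hx, if_neg fun h => hx (hts h), sub_zero, abs_zero]
  have hon_t : ∀ x ∈ t, |uniformOn s x - uniformOn t x| = (#t : ℝ)⁻¹ - (#s : ℝ)⁻¹ :=
    fun x hx => by
      rw [uniformOn, uniformOn, if_pos (hts hx), if_pos hx, abs_sub_comm,
        abs_of_nonneg (sub_nonneg.2 (inv_anti₀ htpos hle))]
  have hon_sdiff : ∀ x ∈ s \ t, |uniformOn s x - uniformOn t x| = (#s : ℝ)⁻¹ := fun x hx => by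
    rw [mem_sdiff] at hx
    simp [uniformOn, hx.1, hx.2]
  rw [← sum_subset (subset_univ s) fun x _ hx => houtside x hx, ← sum_sdiff hts,
    sum_congr rfl hon_t, sum_congr rfl hon_sdiff, sum_const, sum_const, card_sdiff_of_subset hts,
    nsmul_eq_mul, nsmul_eq_mul, Nat.cast_sub (card_le_card hts)]
  field_simp
  ring

end TotalVariation

def hammingWeight {n : ℕ} (x : Fin n → Bool) : ℕ :=
  #(univ.filter fun i => x i = true)

theorem two_le_hammingWeight {n : ℕ} {x : Fin n → Bool} {i j : Fin n} (hij : i ≠ j)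
    (hi : x i = true) (hj : x j = true) : 2 ≤ hammingWeight x := by
  rw [← card_pair hij]
  exact card_le_card (by simp [insert_subset_iff, hi, hj])

def oddWeightStrings : Finset (Fin 3 → Bool) :=
  univ.filter fun x => Odd (hammingWeight x)

def oneInThreeStrings : Finset (Fin 3 → Bool) :=
  univ.filter fun x => hammingWeight x = 1

theorem card_oddWeightStrings : #oddWeightStrings = 4 := by decide

theorem card_oneInThreeStrings : #oneInThreeStrings = 3 := by decide

theorem oneInThreeStrings_subset_oddWeightStrings : oneInThreeStrings ⊆ oddWeightStrings := by
  decide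

theorem card_filter_oddWeightStrings {i j : Fin 3} (hij : i ≠ j) (a b : Bool) :
    #(oddWeightStrings.filter fun x => x i = a ∧ x j = b) = 1 := by
  revert i j a b
  decide

/-- For the 1-in-3-SAT predicate on `{0,1}³` (satisfied iff exactly one input is true),
the minimum total variation distance between a pairwise-uniform distribution `μ` and a
distribution `σ` supported on satisfying assignments equals `1/4`. -/
theorem stmt_12 :
    IsLeast
      { d : ℝ | ∃ μ σ : (Fin 3 → Bool) → ℝ,
          (∀ x, 0 ≤ μ x) ∧ (∑ x, μ x = 1) ∧
          (∀ x, 0 ≤ σ x) ∧ (∑ x, σ x = 1) ∧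
          (∀ i j : Fin 3, i ≠ j → ∀ a b : Bool,
            ∑ x ∈ Finset.univ.filter (fun x : Fin 3 → Bool => x i = a ∧ x j = b), μ x
              = 1 / 4) ∧
          (∀ x : Fin 3 → Bool,
            (Finset.univ.filter fun i => x i = true).card ≠ 1 → σ x = 0) ∧
          d = (1 / 2) * ∑ x, |μ x - σ x| }
      (1 / 4) := by
  have hone : oneInThreeStrings.Nonempty := card_pos.1 (by rw [card_oneInThreeStrings]; norm_num)
  constructor
  · refine ⟨uniformOn oddWeightStrings, uniformOn oneInThreeStrings, uniformOn_nonneg _,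
      sum_uniformOn (hone.mono oneInThreeStrings_subset_oddWeightStrings), uniformOn_nonneg _,
      sum_uniformOn hone, fun i j hij a b => ?_,
      fun x hx => uniformOn_of_notMem fun hmem => hx (mem_filter.1 hmem).2, ?_⟩
    · rw [sum_filter_uniformOn, card_filter_oddWeightStrings hij, card_oddWeightStrings]
      norm_num
    · rw [half_sum_abs_sub_uniformOn_of_subset oneInThreeStrings_subset_oddWeightStrings hone,
        card_oneInThreeStrings, card_oddWeightStrings]
      norm_num
  · rintro d ⟨μ, σ, -, hμ, -, hσ, hpair, hsupp, rfl⟩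
    set E : Finset (Fin 3 → Bool) := univ.filter fun x => x 0 = true ∧ x 1 = true
    have hμE : ∑ x ∈ E, μ x = 1 / 4 := hpair 0 1 (by decide) true true
    have hσE : ∑ x ∈ E, σ x = 0 := sum_eq_zero fun x hx =>
      hsupp x (one_lt_two.trans_le <| two_le_hammingWeight (by decide)
        (mem_filter.1 hx).2.1 (mem_filter.1 hx).2.2).ne'
    have hdist := two_mul_sum_sub_le_sum_abs_sub μ σ E (hμ.trans hσ.symm)
    rw [sum_sub_distrib, hμE, hσE] at hdist
    linarith
end
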